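/- Let A ⊇ B ⊇ C be a left relative H-separable tower (with data e_i ∈ (B ⊗_C A)^B, d_i ∈ D = A^C, 1 ⊗ 1 = Σ e_i¹ ⊗ e_i² d_i). If there is a C-C-bimodule projection E : B → C with E(1) = 1 (B ⊇ C is a split extension), then D = A^C is a separable extension of R = A^B; explicitly Σ_i E(e_i¹) e_i² ⊗_R d_i is a separability element for D ⊇ R. -/

import Mathlib

/-!  A noncommutative relative tensor product `L ⊗_C R` for a ring `C` mapping
into rings `L` (acting on the right through `f`) and `R` (acting on the left
through `g`), together with the outer left `L`-action `lact`, the outer right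
`R`-action `ract`, a lifting principle for balanced biadditive maps, and the
multiplication map. -/

open scoped TensorProduct

noncomputable section
namespace NCT

variable {C L R : Type*} [Ring C] [Ring L] [Ring R]

/-- The submodule of relations `(l * f c) ⊗ r - l ⊗ (g c * r)`. -/
def rel (f : C →+* L) (g : C →+* R) : Submodule ℤ (L ⊗[ℤ] R) :=
  Submodule.span ℤ
    {x | ∃ (l : L) (c : C) (r : R), x = (l * f c) ⊗ₜ[ℤ] r - l ⊗ₜ[ℤ] (g c * r)}

/-- The relative tensor product `L ⊗_C R`. -/
def Tens (f : C →+* L) (g : C →+* R) : Type _ := (L ⊗[ℤ] R) ⧸ rel f g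

instance (f : C →+* L) (g : C →+* R) : AddCommGroup (Tens f g) :=
  inferInstanceAs (AddCommGroup ((L ⊗[ℤ] R) ⧸ rel f g))

variable (f : C →+* L) (g : C →+* R)

/-- The canonical image of `l ⊗ r` in `L ⊗_C R`. -/
def tmul (l : L) (r : R) : Tens f g := Submodule.Quotient.mk (l ⊗ₜ[ℤ] r)

lemma tmul_rel (l : L) (c : C) (r : R) :
    tmul f g (l * f c) r = tmul f g l (g c * r) := by
  refine (Submodule.Quotient.eq _).2 ?_
  exact Submodule.subset_span ⟨l, c, r, rfl⟩

lemma tmul_add_left (l l' : L) (r : R) :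
    tmul f g (l + l') r = tmul f g l r + tmul f g l' r := by
  show Submodule.Quotient.mk _ = _
  rw [TensorProduct.add_tmul, Submodule.Quotient.mk_add]; rfl

lemma tmul_add_right (l : L) (r r' : R) :
    tmul f g l (r + r') = tmul f g l r + tmul f g l r' := by
  show Submodule.Quotient.mk _ = _
  rw [TensorProduct.tmul_add, Submodule.Quotient.mk_add]; rfl

/-- Package a biadditive map as a bundled `AddMonoidHom`-valued hom. -/
def mkBilin {M N P : Type*} [AddCommGroup M] [AddCommGroup N] [AddCommGroup P]
    (φ : M → N → P)
    (h1 : ∀ m m' n, φ (m + m') n = φ m n + φ m' n)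
    (h2 : ∀ m n n', φ m (n + n') = φ m n + φ m n') : M →+ N →+ P :=
  AddMonoidHom.mk' (fun m => AddMonoidHom.mk' (φ m) (h2 m))
    (fun m m' => by ext n; exact h1 m m' n)

@[simp] lemma mkBilin_apply {M N P : Type*} [AddCommGroup M] [AddCommGroup N] [AddCommGroup P]
    (φ : M → N → P) (h1 h2) (m : M) (n : N) : mkBilin φ h1 h2 m n = φ m n := rfl

/-- Lift a balanced biadditive map to the relative tensor product. -/
def lift {P : Type*} [AddCommGroup P] (φ : L →+ R →+ P)
    (hbal : ∀ l c r, φ (l * f c) r = φ l (g c * r)) : Tens f g →+ P :=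
  (Submodule.liftQ (rel f g)
    (TensorProduct.liftAddHom φ (by
      intro n l r
      simp only [AddMonoidHom.map_zsmul, AddMonoidHom.smul_apply]) ).toIntLinearMap
    (by
      rw [rel, Submodule.span_le]
      rintro x ⟨l, c, r, rfl⟩
      simp only [SetLike.mem_coe, LinearMap.mem_ker, AddMonoidHom.coe_toIntLinearMap,
        map_sub, TensorProduct.liftAddHom_tmul]
      rw [hbal, sub_self])).toAddMonoidHom

@[simp] lemma lift_tmul {P : Type*} [AddCommGroup P] (φ : L →+ R →+ P)
    (hbal : ∀ l c r, φ (l * f c) r = φ l (g c * r)) (l : L) (r : R) :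
    lift f g φ hbal (tmul f g l r) = φ l r := rfl

/-- The outer left action of `L` on `L ⊗_C R`. -/
def lact (l : L) : Tens f g →+ Tens f g :=
  lift f g (mkBilin (fun l' r => tmul f g (l * l') r)
      (fun a b r => by rw [mul_add, tmul_add_left])
      (fun a r s => by rw [tmul_add_right]))
    (fun l' c r => by simp only [mkBilin_apply]; rw [← mul_assoc, tmul_rel])

@[simp] lemma lact_tmul (l l' : L) (r : R) :
    lact f g l (tmul f g l' r) = tmul f g (l * l') r := rfl

/-- The outer right action of `R` on `L ⊗_C R`. -/
def ract (r : R) : Tens f g →+ Tens f g :=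
  lift f g (mkBilin (fun l' r' => tmul f g l' (r' * r))
      (fun a b r' => by rw [tmul_add_left])
      (fun a r' s => by rw [add_mul, tmul_add_right]))
    (fun l' c r' => by simp only [mkBilin_apply]; rw [tmul_rel, mul_assoc])

@[simp] lemma ract_tmul (r r' : R) (l : L) :
    ract f g r (tmul f g l r') = tmul f g l (r' * r) := rfl

/-- The map induced on relative tensor products by a ring map on the left factor. -/
def mapLeft {L' : Type*} [Ring L'] (h : L →+* L') :
    Tens f g →+ Tens (h.comp f) g :=
  lift f g (mkBilin (fun l r => tmul (h.comp f) g (h l) r)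
      (fun a b r => by rw [map_add, tmul_add_left])
      (fun a r s => by rw [tmul_add_right]))
    (fun l c r => by
      simp only [mkBilin_apply, map_mul]
      exact tmul_rel (h.comp f) g (h l) c r)

@[simp] lemma mapLeft_tmul {L' : Type*} [Ring L'] (h : L →+* L') (l : L) (r : R) :
    mapLeft f g h (tmul f g l r) = tmul (h.comp f) g (h l) r := rfl

/-- The multiplication map `L ⊗_C R → R`, `l ⊗ r ↦ jl l * r`, for a ring map
`jl : L → R` compatible with the two maps from `C`. -/
def mulMap (jl : L →+* R) (hcomp : ∀ c, jl (f c) = g c) : Tens f g →+ R :=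
  lift f g (mkBilin (fun l r => jl l * r)
      (fun a b r => by rw [map_add, add_mul])
      (fun a r s => by rw [mul_add]))
    (fun l c r => by simp only [mkBilin_apply]; rw [map_mul, hcomp, mul_assoc])

@[simp] lemma mulMap_tmul (jl : L →+* R) (hcomp : ∀ c, jl (f c) = g c) (l : L) (r : R) :
    mulMap f g jl hcomp (tmul f g l r) = jl l * r := rfl

/-- Induction principle: every element of `L ⊗_C R` is built from `tmul`s. -/
lemma tens_induction {p : Tens f g → Prop} (zero : p 0)
    (tm : ∀ l r, p (tmul f g l r)) (add : ∀ x y, p x → p y → p (x + y)) :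
    ∀ x, p x := by
  intro x
  obtain ⟨y, rfl⟩ := Submodule.Quotient.mk_surjective _ x
  induction y using TensorProduct.induction_on with
  | zero => exact zero
  | tmul l r => exact tm l r
  | add a b ha hb =>
      rw [Submodule.Quotient.mk_add]
      exact add _ _ ha hb

end NCT
end

noncomputable section
open NCT

/-- The tower `A ⊇ B ⊇ C` (given by injective ring maps `ι : C → B`, `j : B → A`) is
*left relative H-separable*: `B ⊗_C A ⊕ * ≅ A^n` as `B`-`A`-bimodules. -/
def LeftRelHSep {C B A : Type*} [Ring C] [Ring B] [Ring A]
    (ι : C →+* B) (j : B →+* A) (n : ℕ) : Prop :=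
  ∃ (i : Tens ι (j.comp ι) →+ (Fin n → A)) (p : (Fin n → A) →+ Tens ι (j.comp ι)),
    (∀ (b : B) x, i (lact ι (j.comp ι) b x) = fun k => j b * i x k) ∧
    (∀ (a : A) x, i (ract ι (j.comp ι) a x) = fun k => i x k * a) ∧
    (∀ (b : B) v, p (fun k => j b * v k) = lact ι (j.comp ι) b (p v)) ∧
    (∀ (a : A) v, p (fun k => v k * a) = ract ι (j.comp ι) a (p v)) ∧
    ∀ x, p (i x) = x

/-- `B` is a *left relative separable extension of `C` in `A`*: the multiplication map
`μ : B ⊗_C A → A` splits as a `B`-`A`-bimodule epimorphism. -/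
def LeftRelSep {C B A : Type*} [Ring C] [Ring B] [Ring A]
    (ι : C →+* B) (j : B →+* A) : Prop :=
  ∃ σ : A →+ Tens ι (j.comp ι),
    (∀ (b : B) (a : A), σ (j b * a) = lact ι (j.comp ι) b (σ a)) ∧
    (∀ (a a' : A), σ (a * a') = ract ι (j.comp ι) a' (σ a)) ∧
    ∀ a, mulMap ι (j.comp ι) j (fun _ => rfl) (σ a) = a

/-- `B ⊇ C` is a separable extension: there is a `B`-central element
`e ∈ B ⊗_C B` with `μ(e) = 1`. -/
def IsSepExt {C B : Type*} [Ring C] [Ring B] (ι : C →+* B) : Prop :=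
  ∃ e : Tens ι ι, (∀ b : B, lact ι ι b e = ract ι ι b e) ∧
    mulMap ι ι (RingHom.id B) (fun _ => rfl) e = 1

/-- The map `B ⊗_C A → A`, `b ⊗ a ↦ (ιE(b))·a`, induced by a `C`-`C`-bimodule
projection `E : B → C`. -/
def EE {C B A : Type*} [Ring C] [Ring B] [Ring A] (ι : C →+* B) (j : B →+* A)
    (E : B →+ C)
    (hEbil : ∀ (c : C) (b : B) (c' : C), E (ι c * b * ι c') = c * E b * c') :
    Tens ι (j.comp ι) →+ A :=
  lift ι (j.comp ι)
    (mkBilin (fun b a => j (ι (E b)) * a)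
      (fun x y a => by rw [map_add, map_add, map_add, add_mul])
      (fun x a a' => by rw [mul_add]))
    (fun b c a => by
      dsimp only [mkBilin_apply]
      have hE : E (b * ι c) = E b * c := by simpa using hEbil 1 b c
      rw [hE, map_mul, map_mul, mul_assoc]
      rfl)

/-! Write `μ : B ⊗_C A → A` for multiplication and `r ⋆ x` for multiplication by `r ∈ D` in the
middle of `B ⊗_C A`. Multiplying `1 ⊗ 1 = ∑ₗ eₗ dₗ` by `x` and moving the `B`-central `eₗ` to the
front gives `x = ∑ₗ eₗ μ(dₗ ⋆ x)`. Applying `EE` to this for `x = r ⋆ eₖ` yields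
`r EE(eₖ) = ∑ₗ EE(eₗ) ρₗₖ` with `ρₗₖ = μ(dₗ r ⋆ eₖ)`, which lies in `R` because `eₖ` is
`B`-central; applying `μ(dₗ r ⋆ -)` to the decomposition of `1 ⊗ 1` gives `∑ₖ ρₗₖ dₖ = dₗ r`.
As the `ρₗₖ` pass through `⊗_R`, these two identities make `f = ∑ₖ EE(eₖ) ⊗ dₖ` commute with `r`.
Finally `EE` applied to the decomposition gives `μ(f) = ∑ₖ EE(eₖ) dₖ = E(1) = 1`. -/

namespace NCT

section Generic

variable {C L R : Type*} [Ring C] [Ring L] [Ring R] (f : C →+* L) (g : C →+* R)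

lemma tmul_zero_right (l : L) : tmul f g l 0 = 0 := by
  show Submodule.Quotient.mk _ = _
  rw [TensorProduct.tmul_zero]
  rfl

lemma tmul_sum_left {κ : Type*} (s : Finset κ) (x : κ → L) (r : R) :
    tmul f g (∑ i ∈ s, x i) r = ∑ i ∈ s, tmul f g (x i) r :=
  map_sum (AddMonoidHom.mk' (tmul f g · r) fun a b => tmul_add_left f g a b r) x s

lemma tmul_sum_right {κ : Type*} (s : Finset κ) (l : L) (y : κ → R) :
    tmul f g l (∑ i ∈ s, y i) = ∑ i ∈ s, tmul f g l (y i) :=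
  map_sum (AddMonoidHom.mk' (tmul f g l) (tmul_add_right f g l)) y s

lemma zero_ract (x : Tens f g) : ract f g 0 x = 0 := by
  induction x using tens_induction with
  | zero => exact map_zero _
  | tm l r => rw [ract_tmul, mul_zero, tmul_zero_right]
  | add u v hu hv => rw [map_add, hu, hv, add_zero]

lemma add_ract (r r' : R) (x : Tens f g) :
    ract f g (r + r') x = ract f g r x + ract f g r' x := by
  induction x using tens_induction with
  | zero => simp only [map_zero, add_zero]
  | tm l s => rw [ract_tmul, ract_tmul, ract_tmul, mul_add, tmul_add_right]
  | add u v hu hv => rw [map_add, hu, hv, map_add, map_add, add_add_add_comm]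

lemma ract_ract (r r' : R) (x : Tens f g) :
    ract f g r (ract f g r' x) = ract f g (r' * r) x := by
  induction x using tens_induction with
  | zero => simp only [map_zero]
  | tm l s => rw [ract_tmul, ract_tmul, ract_tmul, mul_assoc]
  | add u v hu hv => rw [map_add, map_add, hu, hv, map_add]

lemma lact_ract_comm (l : L) (r : R) (x : Tens f g) :
    lact f g l (ract f g r x) = ract f g r (lact f g l x) := by
  induction x using tens_induction with
  | zero => simp only [map_zero]
  | tm l' r' => rfl
  | add u v hu hv => rw [map_add, map_add, hu, hv, map_add, map_add]

def midMul (r : Subring.centralizer (Set.range g)) : Tens f g →+ Tens f g :=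
  lift f g (mkBilin (fun l r' => tmul f g l (r * r'))
      (fun a b r' => tmul_add_left f g a b _)
      (fun a r' s => by rw [mul_add, tmul_add_right]))
    (fun l c r' => by
      simp only [mkBilin_apply]
      rw [tmul_rel, ← mul_assoc, ← mul_assoc,
        Subring.mem_centralizer_iff.mp r.2 _ ⟨c, rfl⟩])

variable {f g}

@[simp] lemma midMul_tmul (r : Subring.centralizer (Set.range g)) (l : L) (r' : R) :
    midMul f g r (tmul f g l r') = tmul f g l (r * r') := rfl

lemma midMul_midMul (r r' : Subring.centralizer (Set.range g)) (x : Tens f g) :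
    midMul f g r (midMul f g r' x) = midMul f g (r * r') x := by
  induction x using tens_induction with
  | zero => simp only [map_zero]
  | tm l s => simp [mul_assoc]
  | add u v hu hv => rw [map_add, map_add, hu, hv, map_add]

lemma midMul_lact (r : Subring.centralizer (Set.range g)) (l : L) (x : Tens f g) :
    midMul f g r (lact f g l x) = lact f g l (midMul f g r x) := by
  induction x using tens_induction with
  | zero => simp only [map_zero]
  | tm l' r' => rfl
  | add u v hu hv => rw [map_add, map_add, hu, hv, map_add, map_add]

lemma midMul_ract (r : Subring.centralizer (Set.range g)) (r' : R) (x : Tens f g) :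
    midMul f g r (ract f g r' x) = ract f g r' (midMul f g r x) := by
  induction x using tens_induction with
  | zero => simp only [map_zero]
  | tm l s => simp [mul_assoc]
  | add u v hu hv => rw [map_add, map_add, hu, hv, map_add, map_add]

lemma lact_sum_tmul_eq_ract_sum_tmul {κ : Type*} [Fintype κ] (x : κ → L) (y : κ → R)
    (ρ : κ → κ → C) (l : L) (r : R) (hx : ∀ k, l * x k = ∑ i, x i * f (ρ i k))
    (hy : ∀ i, ∑ k, g (ρ i k) * y k = y i * r) :
    lact f g l (∑ k, tmul f g (x k) (y k)) = ract f g r (∑ k, tmul f g (x k) (y k)) := by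
  calc lact f g l (∑ k, tmul f g (x k) (y k))
      = ∑ k, ∑ i, tmul f g (x i) (g (ρ i k) * y k) := by
        simp only [map_sum, lact_tmul, hx, tmul_sum_left, tmul_rel]
    _ = ∑ i, ∑ k, tmul f g (x i) (g (ρ i k) * y k) := Finset.sum_comm
    _ = ract f g r (∑ k, tmul f g (x k) (y k)) := by
        simp only [← tmul_sum_right, hy, map_sum, ract_tmul]

variable {κ : Type*} [Fintype κ] (e : κ → Tens f g) (d : κ → Subring.centralizer (Set.range g))

lemma map_tmul_one_one_eq_sum (hdecomp : tmul f g 1 1 = ∑ k, ract f g (d k) (e k))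
    (φ : Tens f g →+ R) (hφ : ∀ r x, φ (ract f g r x) = φ x * r) :
    φ (tmul f g 1 1) = ∑ k, φ (e k) * d k := by
  simp only [hdecomp, map_sum, hφ]

variable (jl : L →+* R) (hcomp : ∀ c, jl (f c) = g c)

lemma mulMap_lact (l : L) (x : Tens f g) :
    mulMap f g jl hcomp (lact f g l x) = jl l * mulMap f g jl hcomp x := by
  induction x using tens_induction with
  | zero => simp only [map_zero, mul_zero]
  | tm l' r => simp [mul_assoc]
  | add u v hu hv => simp only [map_add, hu, hv, mul_add]

lemma mulMap_ract (r : R) (x : Tens f g) :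
    mulMap f g jl hcomp (ract f g r x) = mulMap f g jl hcomp x * r := by
  induction x using tens_induction with
  | zero => simp only [map_zero, zero_mul]
  | tm l r' => simp [mul_assoc]
  | add u v hu hv => simp only [map_add, hu, hv, add_mul]

lemma sum_mulMap_midMul_mul (hdecomp : tmul f g 1 1 = ∑ k, ract f g (d k) (e k))
    (r : Subring.centralizer (Set.range g)) :
    ∑ k, mulMap f g jl hcomp (midMul f g r (e k)) * d k = r := by
  refine (map_tmul_one_one_eq_sum e d hdecomp ((mulMap f g jl hcomp).comp (midMul f g r))
    fun r' x => ?_).symm.trans ?_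
  · simp only [AddMonoidHom.comp_apply, midMul_ract, mulMap_ract]
  · simp

lemma mulMap_midMul_mem_centralizer (r : Subring.centralizer (Set.range g)) (x : Tens f g)
    (hx : ∀ l, lact f g l x = ract f g (jl l) x) :
    mulMap f g jl hcomp (midMul f g r x) ∈ Subring.centralizer (Set.range jl) := by
  rw [Subring.mem_centralizer_iff]
  rintro _ ⟨l, rfl⟩
  rw [← mulMap_lact, ← midMul_lact, hx, midMul_ract, mulMap_ract]

lemma eq_sum_ract_mulMap_midMul (hcent : ∀ k l, lact f g l (e k) = ract f g (jl l) (e k))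
    (hdecomp : tmul f g 1 1 = ∑ k, ract f g (d k) (e k)) (x : Tens f g) :
    x = ∑ k, ract f g (mulMap f g jl hcomp (midMul f g (d k) x)) (e k) := by
  induction x using tens_induction with
  | zero => simp only [map_zero, zero_ract, Finset.sum_const_zero]
  | tm l r =>
      calc tmul f g l r = lact f g l (ract f g r (tmul f g 1 1)) := by simp
        _ = _ := by
          simp only [hdecomp, map_sum, ract_ract, lact_ract_comm, hcent, midMul_tmul, mulMap_tmul]
  | add u v hu hv =>
      conv_lhs => rw [hu, hv]
      simp only [map_add, add_ract, Finset.sum_add_distrib]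

end Generic

section Tower

variable {C B A : Type*} [Ring C] [Ring B] [Ring A] (ι : C →+* B) (j : B →+* A)
  (E : B →+ C) (hEbil : ∀ (c : C) (b : B) (c' : C), E (ι c * b * ι c') = c * E b * c')

@[simp] lemma EE_tmul (b : B) (a : A) :
    EE ι j E hEbil (tmul ι (j.comp ι) b a) = j (ι (E b)) * a := rfl

lemma EE_lact_ι (c : C) (x : Tens ι (j.comp ι)) :
    EE ι j E hEbil (lact ι (j.comp ι) (ι c) x) = j (ι c) * EE ι j E hEbil x := by
  induction x using tens_induction with
  | zero => simp only [map_zero, mul_zero]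
  | tm b a =>
      have hE : E (ι c * b) = c * E b := by simpa using hEbil c b 1
      simp [hE, mul_assoc]
  | add u v hu hv => simp only [map_add, hu, hv, mul_add]

lemma EE_ract (a : A) (x : Tens ι (j.comp ι)) :
    EE ι j E hEbil (ract ι (j.comp ι) a x) = EE ι j E hEbil x * a := by
  induction x using tens_induction with
  | zero => simp only [map_zero, zero_mul]
  | tm b a' => simp [mul_assoc]
  | add u v hu hv => simp only [map_add, hu, hv, add_mul]

lemma EE_midMul (r : Subring.centralizer (Set.range (j.comp ι))) (x : Tens ι (j.comp ι)) :
    EE ι j E hEbil (midMul ι (j.comp ι) r x) = r * EE ι j E hEbil x := by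
  induction x using tens_induction with
  | zero => simp only [map_zero, mul_zero]
  | tm b a =>
      rw [midMul_tmul, EE_tmul, EE_tmul, ← mul_assoc, ← mul_assoc]
      exact congrArg (· * a) (Subring.mem_centralizer_iff.mp r.2 _ ⟨E b, rfl⟩)
  | add u v hu hv => simp only [map_add, hu, hv, mul_add]

lemma EE_mem_centralizer (x : Tens ι (j.comp ι))
    (hx : ∀ c, lact ι (j.comp ι) (ι c) x = ract ι (j.comp ι) (j (ι c)) x) :
    EE ι j E hEbil x ∈ Subring.centralizer (Set.range (j.comp ι)) := by
  rw [Subring.mem_centralizer_iff]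
  rintro _ ⟨c, rfl⟩
  exact (EE_lact_ι ι j E hEbil c x).symm.trans (by rw [hx, EE_ract]; rfl)

variable {κ : Type*} [Fintype κ] (e : κ → Tens ι (j.comp ι))
  (d : κ → Subring.centralizer (Set.range (j.comp ι)))

lemma mul_EE_eq_sum
    (hcent : ∀ k b, lact ι (j.comp ι) b (e k) = ract ι (j.comp ι) (j b) (e k))
    (hdecomp : tmul ι (j.comp ι) 1 1 = ∑ k, ract ι (j.comp ι) (d k) (e k))
    (r : Subring.centralizer (Set.range (j.comp ι))) (x : Tens ι (j.comp ι)) :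
    r * EE ι j E hEbil x = ∑ k, EE ι j E hEbil (e k) *
      mulMap ι (j.comp ι) j (fun _ => rfl) (midMul ι (j.comp ι) (d k * r) x) := by
  rw [← EE_midMul, eq_sum_ract_mulMap_midMul e d j (fun _ => rfl) hcent hdecomp
    (midMul ι (j.comp ι) r x), map_sum]
  simp only [EE_ract, midMul_midMul]

lemma sum_EE_mul_eq_one (hE : E 1 = 1)
    (hdecomp : tmul ι (j.comp ι) 1 1 = ∑ k, ract ι (j.comp ι) (d k) (e k)) :
    ∑ k, EE ι j E hEbil (e k) * d k = 1 := by
  rw [← map_tmul_one_one_eq_sum e d hdecomp _ (EE_ract ι j E hEbil)]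
  simp [hE]

end Tower

end NCT

theorem centralizer_separable_of_split_general
    {C B A : Type*} [Ring C] [Ring B] [Ring A]
    (ι : C →+* B) (j : B →+* A)
    (hRD : Subring.centralizer (Set.range j) ≤ Subring.centralizer (Set.range (j.comp ι)))
    (n : ℕ) (e : Fin n → Tens ι (j.comp ι)) (d : Fin n → A)
    (hd : ∀ k, d k ∈ Subring.centralizer (Set.range (j.comp ι)))
    (hcent : ∀ (k : Fin n) (b : B),
      lact ι (j.comp ι) b (e k) = ract ι (j.comp ι) (j b) (e k))
    (hdecomp : tmul ι (j.comp ι) 1 1 = ∑ k, ract ι (j.comp ι) (d k) (e k))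
    (E : B →+ C) (hEproj : ∀ c : C, E (ι c) = c)
    (hEbil : ∀ (c : C) (b : B) (c' : C), E (ι c * b * ι c') = c * E b * c') :
    ∃ hmem : ∀ k, EE ι j E hEbil (e k) ∈ Subring.centralizer (Set.range (j.comp ι)),
      ∃ f : Tens (Subring.inclusion hRD) (Subring.inclusion hRD),
        f = ∑ k, tmul (Subring.inclusion hRD) (Subring.inclusion hRD)
              ⟨EE ι j E hEbil (e k), hmem k⟩ ⟨d k, hd k⟩ ∧
        (∀ dd : ↥(Subring.centralizer (Set.range (j.comp ι))),
          lact (Subring.inclusion hRD) (Subring.inclusion hRD) dd f =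
          ract (Subring.inclusion hRD) (Subring.inclusion hRD) dd f) ∧
        mulMap (Subring.inclusion hRD) (Subring.inclusion hRD)
          (RingHom.id _) (fun _ => rfl) f = 1 := by
  let d' : Fin n → Subring.centralizer (Set.range (j.comp ι)) := fun k => ⟨d k, hd k⟩
  have hmem : ∀ k, EE ι j E hEbil (e k) ∈ Subring.centralizer (Set.range (j.comp ι)) :=
    fun k => EE_mem_centralizer ι j E hEbil (e k) fun c => hcent k (ι c)
  refine ⟨hmem, _, rfl, fun r => ?_, ?_⟩
  · refine lact_sum_tmul_eq_ract_sum_tmul _ _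
      (fun l k => ⟨mulMap ι (j.comp ι) j (fun _ => rfl) (midMul ι (j.comp ι) (d' l * r) (e k)),
        mulMap_midMul_mem_centralizer j _ _ _ (hcent k)⟩) r r (fun k => ?_) (fun l => ?_)
    · ext
      simpa using mul_EE_eq_sum ι j E hEbil e d' hcent hdecomp r (e k)
    · ext
      simpa using sum_mulMap_midMul_mul e d' j (fun _ => rfl) hdecomp (d' l * r)
  · ext
    simpa using sum_EE_mul_eq_one ι j E hEbil e d' (by simpa using hEproj 1) hdecomp

/-- given a left relative H-separable tower `A ⊇ B ⊇ C` (with data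
`e_i ∈ (B ⊗_C A)^B`, `d_i ∈ D = A^C`, `1 ⊗ 1 = Σ e_i¹ ⊗ e_i² d_i`) and a `C`-`C`-bimodule
projection `E : B → C`, the element `Σ E(e_i¹) e_i² ⊗_R d_i` is a separability element
for `D ⊇ R`; in particular `D` is a separable extension of `R = A^B`. -/
theorem centralizer_separable_of_split
    {C B A : Type*} [Ring C] [Ring B] [Ring A]
    (ι : C →+* B) (j : B →+* A)
    (hι : Function.Injective ι) (hj : Function.Injective j)
    (hRD : Subring.centralizer (Set.range j) ≤ Subring.centralizer (Set.range (j.comp ι)))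
    (n : ℕ) (e : Fin n → Tens ι (j.comp ι)) (d : Fin n → A)
    (hd : ∀ k, d k ∈ Subring.centralizer (Set.range (j.comp ι)))
    (hcent : ∀ (k : Fin n) (b : B),
      lact ι (j.comp ι) b (e k) = ract ι (j.comp ι) (j b) (e k))
    (hdecomp : tmul ι (j.comp ι) 1 1 = ∑ k, ract ι (j.comp ι) (d k) (e k))
    (E : B →+ C) (hEproj : ∀ c : C, E (ι c) = c)
    (hEbil : ∀ (c : C) (b : B) (c' : C), E (ι c * b * ι c') = c * E b * c') :
    ∃ hmem : ∀ k, EE ι j E hEbil (e k) ∈ Subring.centralizer (Set.range (j.comp ι)),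
      ∃ f : Tens (Subring.inclusion hRD) (Subring.inclusion hRD),
        f = ∑ k, tmul (Subring.inclusion hRD) (Subring.inclusion hRD)
              ⟨EE ι j E hEbil (e k), hmem k⟩ ⟨d k, hd k⟩ ∧
        (∀ dd : ↥(Subring.centralizer (Set.range (j.comp ι))),
          lact (Subring.inclusion hRD) (Subring.inclusion hRD) dd f =
          ract (Subring.inclusion hRD) (Subring.inclusion hRD) dd f) ∧
        mulMap (Subring.inclusion hRD) (Subring.inclusion hRD)
          (RingHom.id _) (fun _ => rfl) f = 1 :=
  centralizer_separable_of_split_general ι j hRD n e d hd hcent hdecomp E hEproj hEbil
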